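/- arXiv:1902.04466 — 6 statements merged into one kernel-verified Lean document; each statement's English description precedes it below -/
import Mathlib

section
/- The function z ↦ 28 sin z + sin 2z − z (18 + 12 cos z) is O(z⁷) as z → 0 but is not O(z⁸). Equivalently, the numerical wavenumber f₆(z) = (28 sin z + sin 2z)/(18 + 12 cos z) satisfies f₆(z) = z + O(z⁷), i.e. it corresponds to an exactly sixth-order accurate scheme. -/
open Asymptotics Filter Real

/-!
Since `sin z = (e^{iz} - e^{-iz}) / 2i` and `cos z = (e^{iz} + e^{-iz}) / 2`, the function
`28 sin z + sin 2z - z (18 + 12 cos z)` is a combination of `e^{± iz}` and `e^{± 2iz}` with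
coefficients bounded near `0`. Replacing each exponential by its Taylor polynomial of degree `7`
leaves exactly `-z⁷/70`, and the four remainders are `O(z⁸)`. So the function is
`-z⁷/70 + O(z⁸)`, hence `O(z⁷)` and not `O(z⁸)`.
-/

open Finset Topology

lemma Asymptotics.isBigO_pow_and_not_isBigO_pow_succ {𝕜 : Type*} [NontriviallyNormedField 𝕜]
    {f : 𝕜 → 𝕜} {c : 𝕜} (hc : c ≠ 0) {n : ℕ}
    (h : (fun x => f x - c * x ^ n) =O[𝓝 0] fun x => x ^ (n + 1)) :
    f =O[𝓝 0] (fun x => x ^ n) ∧ ¬ f =O[𝓝 0] fun x => x ^ (n + 1) := by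
  have hsucc : (fun x : 𝕜 => x ^ (n + 1)) =o[𝓝 0] fun x => x ^ n :=
    isLittleO_pow_pow n.lt_succ_self
  constructor
  · simpa using (h.trans hsucc.isBigO).add (isBigO_const_mul_self c (fun x : 𝕜 => x ^ n) _)
  · intro hf
    have hmain : (fun x => c * x ^ n) =O[𝓝 0] fun x => x ^ (n + 1) := by
      simpa using hf.sub h
    have hpow_ne : ∃ᶠ x : 𝕜 in 𝓝 0, x ^ n ≠ 0 :=
      (eventually_nhdsWithin_of_forall (s := {0}ᶜ) fun x hx => pow_ne_zero n hx).frequently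
        |>.filter_mono nhdsWithin_le_nhds
    exact ((isBigO_const_mul_left_iff hc).1 hmain).not_isLittleO hpow_ne hsucc

noncomputable def Complex.expTaylorRemainder (n : ℕ) (z : ℂ) : ℂ :=
  Complex.exp z - ∑ m ∈ range n, z ^ m / m.factorial

namespace Complex

lemma expTaylorRemainder_isBigO (n : ℕ) :
    expTaylorRemainder n =O[𝓝 0] fun z => z ^ n := by
  rcases n.eq_zero_or_pos with rfl | hn
  · simpa [expTaylorRemainder] using (continuous_exp.tendsto 0).isBigO_one ℂ
  · have hsmall : ∀ᶠ z : ℂ in 𝓝 0, ‖z‖ ≤ 1 :=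
      tendsto_norm_zero.eventually (eventually_le_nhds one_pos)
    refine IsBigO.of_bound ((n.succ : ℝ) * (n.factorial * n : ℝ)⁻¹) (hsmall.mono fun z hz => ?_)
    rw [norm_pow, mul_comm]
    exact exp_bound hz hn

lemma expTaylorRemainder_const_mul_isBigO (n : ℕ) (c : ℂ) :
    (fun z => expTaylorRemainder n (c * z)) =O[𝓝 0] fun z => z ^ n := by
  have hc : Tendsto (fun z : ℂ => c * z) (𝓝 0) (𝓝 0) := by
    simpa using (continuous_const_mul c).tendsto 0
  have hpow : (fun z : ℂ => (c * z) ^ n) =O[𝓝 0] fun z => z ^ n := by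
    simpa [mul_pow] using isBigO_const_mul_self (c ^ n) (fun z : ℂ => z ^ n) (𝓝 0)
  exact ((expTaylorRemainder_isBigO n).comp_tendsto hc).trans hpow

lemma sixthOrder_error_eq (z : ℂ) :
    28 * sin z + sin (2 * z) - z * (18 + 12 * cos z) + z ^ 7 / 70
      = (-14 * I - 6 * z) * expTaylorRemainder 8 (I * z)
        + (14 * I - 6 * z) * expTaylorRemainder 8 (-I * z)
        - I / 2 * expTaylorRemainder 8 (2 * I * z)
        + I / 2 * expTaylorRemainder 8 (-2 * I * z) := by
  simp only [expTaylorRemainder, sin, cos, sum_range_succ, sum_range_zero]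
  push_cast [Nat.factorial]
  ring_nf
  simp only [show (6 : ℕ) = 2 + 4 by rfl, show (8 : ℕ) = 4 + 4 by rfl, pow_add, I_sq, I_pow_four]
  ring

lemma sixthOrder_error_isBigO :
    (fun z => 28 * sin z + sin (2 * z) - z * (18 + 12 * cos z) + z ^ 7 / 70)
      =O[𝓝 0] fun z => z ^ 8 := by
  have hterm : ∀ (a : ℂ → ℂ), Continuous a → ∀ c : ℂ,
      (fun z => a z * expTaylorRemainder 8 (c * z)) =O[𝓝 0] fun z => z ^ 8 := fun a ha c => by
    simpa using ((ha.tendsto 0).isBigO_one ℂ).mul (expTaylorRemainder_const_mul_isBigO 8 c)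
  simp only [sixthOrder_error_eq]
  exact (((hterm _ (by fun_prop) _).add (hterm _ (by fun_prop) _)).sub
    (hterm _ (by fun_prop) _)).add (hterm _ (by fun_prop) _)

end Complex

lemma Real.sixthOrder_error_isBigO :
    (fun x : ℝ => 28 * sin x + sin (2 * x) - x * (18 + 12 * cos x) + x ^ 7 / 70)
      =O[𝓝 0] fun x => x ^ 8 := by
  rw [← Complex.isBigO_ofReal_left, ← Complex.isBigO_ofReal_right]
  push_cast
  exact Complex.sixthOrder_error_isBigO.comp_tendsto
    (Complex.continuous_ofReal.tendsto' 0 0 Complex.ofReal_zero)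

/-- `28 sin z + sin 2z - z (18 + 12 cos z)` is `O(z⁷)` as `z → 0` but not `O(z⁸)`:
the numerical wavenumber `f₆(z) = (28 sin z + sin 2z)/(18 + 12 cos z)` corresponds to an
exactly sixth-order accurate scheme. -/
theorem f6_exactly_sixth_order :
    ((fun z : ℝ => 28 * Real.sin z + Real.sin (2*z) - z * (18 + 12 * Real.cos z))
        =O[nhds (0:ℝ)] (fun z : ℝ => z ^ 7))
    ∧ ¬ ((fun z : ℝ => 28 * Real.sin z + Real.sin (2*z) - z * (18 + 12 * Real.cos z))
        =O[nhds (0:ℝ)] (fun z : ℝ => z ^ 8)) :=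
  isBigO_pow_and_not_isBigO_pow_succ (c := -1 / 70) (n := 7) (by norm_num) <| by
    simpa [sub_eq_add_neg, div_eq_mul_inv, mul_comm] using Real.sixthOrder_error_isBigO
end

section
/- Let a = 1/2 − 1/(2√5), b = 1 − 1/(30 a), c = 0 (Hixon's sixth-order prefactored coefficients). For every real z the denominator a e^{iz} + (1 − a) is nonzero, and the forward numerical wavenumber K_F(z) = −i · (b e^{iz} − (2b−1) − (1−b) e^{−iz}) / (a e^{iz} + (1−a)) satisfies Re K_F(z) = (28 sin z + sin 2z)/(18 + 12 cos z). -/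
/-!
Writing `N = b e^{iz} - (2b - 1) - (1 - b) e^{-iz}` and `D = a e^{iz} + (1 - a)`, one has
`Re K_F = Im (N / D) = sin z · (1 - a + a cos z - a (2b - 1)(cos z - 1)) / |D|²` and
`|D|² = 1 - 2a(1 - a)(1 - cos z)`. Hixon's coefficients satisfy `a (1 - a) = 1/5` and
`a b = a - 1/30`, which turn the bracket into `(14 + cos z)/15` and `|D|²` into `(3 + 2 cos z)/5`.
-/

open Complex

noncomputable section

def prefactoredDenom (a z : ℝ) : ℂ :=
  a * exp (I * z) + (1 - a)

def forwardWavenumber (a b z : ℝ) : ℂ :=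
  -I * (b * exp (I * z) - (2 * b - 1) - (1 - b) * exp (-(I * z))) / prefactoredDenom a z

theorem exp_I_mul_ofReal (z : ℝ) : exp (I * z) = Real.cos z + Real.sin z * I := by
  rw [mul_comm, exp_mul_I, ← ofReal_cos, ← ofReal_sin]

theorem normSq_prefactoredDenom (a z : ℝ) :
    normSq (prefactoredDenom a z) = 1 - 2 * (a * (1 - a)) * (1 - Real.cos z) := by
  rw [prefactoredDenom, exp_I_mul_ofReal, normSq_apply]
  simp only [add_re, add_im, mul_re, mul_im, sub_re, sub_im, ofReal_re, ofReal_im, one_re, one_im,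
    I_re, I_im]
  linear_combination a ^ 2 * Real.sin_sq_add_cos_sq z

/-- `|a e^{iz} + (1 - a)|² ≥ (1 - 2a)²`. -/
theorem prefactoredDenom_ne_zero {a : ℝ} (ha : a ≠ 1 / 2) (z : ℝ) : prefactoredDenom a z ≠ 0 := by
  have hsq : 0 < (1 - 2 * a) ^ 2 := sq_pos_of_ne_zero (by contrapose! ha; linarith)
  refine normSq_pos.mp ?_
  rw [normSq_prefactoredDenom]
  have hc₁ := Real.neg_one_le_cos z
  have hc₂ := Real.cos_le_one z
  rcases le_or_gt 0 (a * (1 - a)) with hp | hp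
  · nlinarith [mul_le_mul_of_nonneg_left (show 1 - Real.cos z ≤ 2 by linarith) hp]
  · nlinarith [mul_nonpos_of_nonpos_of_nonneg hp.le (show 0 ≤ 1 - Real.cos z by linarith)]

theorem forwardWavenumber_re (a b z : ℝ) :
    (forwardWavenumber a b z).re =
      Real.sin z * (1 - a + a * Real.cos z - a * (2 * b - 1) * (Real.cos z - 1)) /
        normSq (prefactoredDenom a z) := by
  rw [forwardWavenumber, mul_div_assoc, neg_mul, neg_re, I_mul_re, neg_neg, div_im,
    div_sub_div_same]
  have hexp_neg : exp (-(I * z)) = Real.cos z - Real.sin z * I := by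
    rw [← mul_neg, ← ofReal_neg, exp_I_mul_ofReal, Real.cos_neg, Real.sin_neg, ofReal_neg, neg_mul,
      ← sub_eq_add_neg]
  congr 1
  rw [prefactoredDenom, hexp_neg, exp_I_mul_ofReal]
  simp only [add_re, add_im, mul_re, mul_im, sub_re, sub_im, ofReal_re, ofReal_im, one_re, one_im,
    I_re, I_im, re_ofNat, im_ofNat]
  ring

theorem forwardWavenumber_re_of_sixth_order {a b : ℝ} (hp : a * (1 - a) = 1 / 5)
    (hab : a * b = a - 1 / 30) (z : ℝ) :
    (forwardWavenumber a b z).re = (28 * Real.sin z + Real.sin (2 * z)) / (18 + 12 * Real.cos z) := by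
  have hbracket : 1 - a + a * Real.cos z - a * (2 * b - 1) * (Real.cos z - 1) =
      (14 + Real.cos z) / 15 := by
    linear_combination (2 - 2 * Real.cos z) * hab
  have hc : 0 < 3 + 2 * Real.cos z := by linarith [Real.neg_one_le_cos z]
  rw [forwardWavenumber_re, normSq_prefactoredDenom, hp, hbracket, Real.sin_two_mul,
    show 18 + 12 * Real.cos z = 6 * (3 + 2 * Real.cos z) by ring]
  field_simp
  ring

end

theorem hixon_sixth_order_real_part_general
    (a b : ℝ)
    (ha : a = 1/2 - 1/(2 * Real.sqrt 5))
    (hb : b = 1 - 1/(30 * a)) :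
    ∀ z : ℝ,
      ((a : ℂ) * Complex.exp (Complex.I * (z : ℂ)) + (1 - (a : ℂ)) ≠ 0) ∧
      (-Complex.I *
          ((b : ℂ) * Complex.exp (Complex.I * (z : ℂ)) - (2 * (b : ℂ) - 1)
            - (1 - (b : ℂ)) * Complex.exp (-(Complex.I * (z : ℂ)))) /
          ((a : ℂ) * Complex.exp (Complex.I * (z : ℂ)) + (1 - (a : ℂ)))).re
        = (28 * Real.sin z + Real.sin (2*z)) / (18 + 12 * Real.cos z) := by
  have hsqrt : Real.sqrt 5 ^ 2 = 5 := Real.sq_sqrt (by norm_num)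
  have hp : a * (1 - a) = 1 / 5 := by
    rw [ha]
    field_simp
    linear_combination hsqrt
  have ha₀ : a ≠ 0 := by rintro rfl; norm_num at hp
  have hab : a * b = a - 1 / 30 := by
    rw [hb]
    field_simp
  have ha_half : a ≠ 1 / 2 := by rintro rfl; norm_num at hp
  exact fun z => ⟨prefactoredDenom_ne_zero ha_half z, forwardWavenumber_re_of_sixth_order hp hab z⟩

/-- for Hixon's sixth-order prefactored coefficients
`a = 1/2 - 1/(2√5)`, `b = 1 - 1/(30a)`, `c = 0`, the denominator `a e^{iz} + (1-a)` never
vanishes and the real part of the forward numerical wavenumber equals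
`(28 sin z + sin 2z)/(18 + 12 cos z)`. -/
theorem hixon_sixth_order_real_part
    (a b c : ℝ)
    (ha : a = 1/2 - 1/(2 * Real.sqrt 5))
    (hb : b = 1 - 1/(30 * a))
    (hc : c = 0) :
    ∀ z : ℝ,
      ((a : ℂ) * Complex.exp (Complex.I * (z : ℂ)) + (1 - (a : ℂ)) ≠ 0) ∧
      (-Complex.I *
          ((b : ℂ) * Complex.exp (Complex.I * (z : ℂ)) - (2 * (b : ℂ) - 1)
            - (1 - (b : ℂ)) * Complex.exp (-(Complex.I * (z : ℂ)))) /
          ((a : ℂ) * Complex.exp (Complex.I * (z : ℂ)) + (1 - (a : ℂ)))).re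
        = (28 * Real.sin z + Real.sin (2*z)) / (18 + 12 * Real.cos z) :=
  hixon_sixth_order_real_part_general a b ha hb
end

section
/- Fix (ξ, η) ∈ ℝ². For h ≠ 0 define the weighted-average discrete Laplacian symbol S(h) = (2/3)·[4 sin²(ξh/2) + 4 sin²(ηh/2)]/h² + (1/3)·[4 sin²((ξ+η)h/2) + 4 sin²((ξ−η)h/2)]/(2h²). Then as h → 0, S(h) = (ξ² + η²) − (h²/12)(ξ² + η²)² + O(h⁴); in particular the leading h² error term depends only on ξ² + η² and is therefore rotation-invariant (isotropic). -/
open Asymptotics Filter Topology Real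

/-!
Since `4 sin²(a h / 2) = 2 - 2 cos (a h) = a² h² - a⁴ h⁴ / 12 + O(h⁶)`, the symbol times `h²` is
`(ξ² + η²) h² - c h⁴ / 12 + O(h⁶)` with
`c = (2/3)(ξ⁴ + η⁴) + (1/6)((ξ + η)⁴ + (ξ - η)⁴) = (ξ² + η²)²`: the weights `2/3, 1/3` are exactly
those for which the cross term `ξ²η²` completes the square.
-/

lemma abs_cos_sub_taylor_le {x : ℝ} (hx : |x| ≤ 1) :
    |cos x - (1 - x ^ 2 / 2 + x ^ 4 / 24)| ≤ |x| ^ 6 := by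
  set E : ℂ := Complex.exp (x * Complex.I) - ∑ m ∈ Finset.range 6, (x * Complex.I) ^ m / m.factorial
  have hnorm : ‖(x : ℂ) * Complex.I‖ = |x| := by simp
  -- the real part of the degree-5 Taylor polynomial of `exp (x i)` is that of `cos x`
  have hre : cos x - (1 - x ^ 2 / 2 + x ^ 4 / 24) = E.re := by
    simp [E, Complex.exp_mul_I, Complex.cos_ofReal_re, Finset.sum_range_succ,
      pow_succ, Nat.factorial]
    ring
  calc |cos x - (1 - x ^ 2 / 2 + x ^ 4 / 24)|
      = |E.re| := by rw [hre]
    _ ≤ ‖E‖ := Complex.abs_re_le_norm E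
    _ ≤ |x| ^ 6 * ((6 : ℕ).succ * ((6 : ℕ).factorial * 6 : ℝ)⁻¹) := by
        rw [← hnorm]; exact Complex.exp_bound (hnorm ▸ hx) (by norm_num)
    _ ≤ |x| ^ 6 := by
        apply mul_le_of_le_one_right (by positivity)
        norm_num [Nat.factorial]

lemma cos_sub_taylor_isBigO :
    (fun x : ℝ => cos x - (1 - x ^ 2 / 2 + x ^ 4 / 24)) =O[𝓝 0] (· ^ 6) := by
  refine IsBigO.of_bound 1 ?_
  filter_upwards [Metric.closedBall_mem_nhds (0 : ℝ) one_pos] with x hx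
  rw [Metric.mem_closedBall, dist_zero_right, norm_eq_abs] at hx
  simpa [abs_pow] using abs_cos_sub_taylor_le hx

lemma four_sin_sq_half_sub_taylor_isBigO (a : ℝ) :
    (fun h : ℝ => 4 * sin (a * h / 2) ^ 2 - (a ^ 2 * h ^ 2 - a ^ 4 * h ^ 4 / 12))
      =O[𝓝 0] (· ^ 6) := by
  have hlim : Tendsto (fun h : ℝ => a * h) (𝓝 0) (𝓝 0) := by
    simpa using (continuous_const_mul a).tendsto 0
  have hcos := (cos_sub_taylor_isBigO.comp_tendsto hlim).const_mul_left (-2)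
  have hsin : ∀ h : ℝ, 4 * sin (a * h / 2) ^ 2 - (a ^ 2 * h ^ 2 - a ^ 4 * h ^ 4 / 12)
      = -2 * (cos (a * h) - (1 - (a * h) ^ 2 / 2 + (a * h) ^ 4 / 24)) := fun h => by
    rw [sin_sq_eq_half_sub, show 2 * (a * h / 2) = a * h by ring]
    ring
  simp only [hsin]
  refine hcos.trans ?_
  simpa [Function.comp_def, mul_pow] using isBigO_const_mul_self (a ^ 6) (· ^ 6 : ℝ → ℝ) (𝓝 0)

lemma IsBigO.div_sq_nhdsNE {𝕜 : Type*} [NormedField 𝕜] {f : 𝕜 → 𝕜} {n : ℕ}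
    (hf : f =O[𝓝 0] (· ^ (n + 2))) : (fun h => f h / h ^ 2) =O[𝓝[≠] 0] (· ^ n) := by
  refine ((hf.mono nhdsWithin_le_nhds).mul (isBigO_refl (fun h : 𝕜 => (h ^ 2)⁻¹) _)).congr'
    (Eventually.of_forall fun h => (div_eq_mul_inv _ _).symm) ?_
  filter_upwards [self_mem_nhdsWithin] with h (hh : h ≠ 0)
  rw [pow_add, mul_inv_cancel_right₀ (pow_ne_zero 2 hh)]

/-- the weighted-average (2/3 axis + 1/3 diagonal) discrete Laplacian symbol
satisfies `S(h) = (ξ²+η²) − (h²/12)(ξ²+η²)² + O(h⁴)` as `h → 0`; the leading error depends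
only on `ξ²+η²` and is hence isotropic. -/
theorem weighted_laplacian_symbol_isotropic (ξ η : ℝ) :
    (fun h : ℝ =>
        ((2/3) * ((4 * Real.sin (ξ*h/2) ^ 2 + 4 * Real.sin (η*h/2) ^ 2) / h ^ 2)
          + (1/3) * ((4 * Real.sin ((ξ+η)*h/2) ^ 2 + 4 * Real.sin ((ξ-η)*h/2) ^ 2) / (2 * h ^ 2)))
        - ((ξ ^ 2 + η ^ 2) - (h ^ 2 / 12) * (ξ ^ 2 + η ^ 2) ^ 2))
      =O[𝓝[≠] (0:ℝ)] (fun h : ℝ => h ^ 4) := by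
  have hE := four_sin_sq_half_sub_taylor_isBigO
  have hweighted := ((((hE ξ).const_mul_left (2/3)).add ((hE η).const_mul_left (2/3))).add
    ((hE (ξ + η)).const_mul_left (1/6))).add ((hE (ξ - η)).const_mul_left (1/6))
  refine (IsBigO.div_sq_nhdsNE (n := 4) hweighted).congr' ?_ EventuallyEq.rfl
  filter_upwards [self_mem_nhdsWithin] with h (hh : h ≠ 0)
  field_simp
  ring
end

section
/- Let β ≥ 0 and σ_x ≥ σ_y ≥ 0 be real numbers. Then for all θ, φ ∈ ℝ, |σ_x sin θ (1 + β cos φ) + σ_y sin φ (1 + β cos θ)| ≤ (1+β) σ_x + σ_y. Consequently, if (1+β) σ_x + σ_y ≤ CFL·(1+β) with CFL = 1, the Fourier symbol of the multidimensional second-order (E2-based) scheme for the 2D advection equation is bounded by (1+β)·CFL, which yields the Leap-Frog stability restriction (1+β)σ_x + σ_y ≤ CFL(1+β) stated by Sescu et al. -/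
open Real

theorem aux_symbol_bound (β σx σy : ℝ) (hβ : 0 ≤ β) (hyx : σy ≤ σx) (hy : 0 ≤ σy)
    (θ φ : ℝ) :
    |σx * Real.sin θ * (1 + β * Real.cos φ) + σy * Real.sin φ * (1 + β * Real.cos θ)|
      ≤ (1 + β) * σx + σy := by
  have hx : 0 ≤ σx := hy.trans hyx
  have s1 := Real.neg_one_le_sin θ
  have s1' := Real.sin_le_one θ
  have s2 := Real.neg_one_le_sin φ
  have s2' := Real.sin_le_one φ
  have c1 := Real.neg_one_le_cos θ
  have c1' := Real.cos_le_one θ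
  have c2 := Real.neg_one_le_cos φ
  have c2' := Real.cos_le_one φ
  have s3 : Real.sin θ * Real.cos φ + Real.cos θ * Real.sin φ = Real.sin (θ + φ) :=
    (Real.sin_add θ φ).symm
  have s3a := Real.neg_one_le_sin (θ + φ)
  have s3b := Real.sin_le_one (θ + φ)
  have p1 : |Real.sin θ * Real.cos φ| ≤ 1 := by
    rw [abs_mul]
    exact mul_le_one₀ (abs_sin_le_one θ) (abs_nonneg _) (abs_cos_le_one φ)
  have p1a : -1 ≤ Real.sin θ * Real.cos φ := (abs_le.1 p1).1
  have p1b : Real.sin θ * Real.cos φ ≤ 1 := (abs_le.1 p1).2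
  rw [abs_le]
  constructor
  · nlinarith [mul_nonneg hx (by linarith : 0 ≤ 1 + Real.sin θ),
      mul_nonneg hy (by linarith : 0 ≤ 1 + Real.sin φ),
      mul_nonneg (mul_nonneg hβ hy) (by rw [s3]; linarith : 0 ≤ 1 + (Real.sin θ * Real.cos φ + Real.cos θ * Real.sin φ)),
      mul_nonneg (mul_nonneg hβ (sub_nonneg.2 hyx)) (by linarith : 0 ≤ 1 + Real.sin θ * Real.cos φ)]
  · nlinarith [mul_nonneg hx (by linarith : 0 ≤ 1 - Real.sin θ),
      mul_nonneg hy (by linarith : 0 ≤ 1 - Real.sin φ),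
      mul_nonneg (mul_nonneg hβ hy) (by rw [s3]; linarith : 0 ≤ 1 - (Real.sin θ * Real.cos φ + Real.cos θ * Real.sin φ)),
      mul_nonneg (mul_nonneg hβ (sub_nonneg.2 hyx)) (by linarith : 0 ≤ 1 - Real.sin θ * Real.cos φ)]

/-- for `β ≥ 0` and `σ_x ≥ σ_y ≥ 0`, the Fourier symbol bound
`|σ_x sin θ (1 + β cos φ) + σ_y sin φ (1 + β cos θ)| ≤ (1+β)σ_x + σ_y` holds for all `θ, φ`;
consequently, if `(1+β)σ_x + σ_y ≤ CFL(1+β)` with `CFL = 1`, the symbol is bounded by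
`(1+β)·CFL`, which is the Leap-Frog stability restriction of Sescu et al. -/
theorem multidimensional_E2_stability
    (β σx σy : ℝ) (hβ : 0 ≤ β) (hyx : σy ≤ σx) (hy : 0 ≤ σy) :
    (∀ θ φ : ℝ,
        |σx * Real.sin θ * (1 + β * Real.cos φ) + σy * Real.sin φ * (1 + β * Real.cos θ)|
          ≤ (1 + β) * σx + σy)
    ∧ ((1 + β) * σx + σy ≤ 1 * (1 + β) →
        ∀ θ φ : ℝ,
          |σx * Real.sin θ * (1 + β * Real.cos φ) + σy * Real.sin φ * (1 + β * Real.cos θ)|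
            ≤ (1 + β) * 1) := by
  refine ⟨fun θ φ => aux_symbol_bound β σx σy hβ hyx hy θ φ, fun h θ φ => ?_⟩
  have := aux_symbol_bound β σx σy hβ hyx hy θ φ
  linarith
end

section
/- Let u : ℝ² → ℝ be five times continuously differentiable (e.g. C⁵ on a neighborhood of a fixed point (x,y), or C^∞). Define for h ≠ 0 Kumar's isotropic first-derivative stencil D_I(h) = (1/(2h)) [ (1/6)(u(x+h,y+h) − u(x−h,y+h)) + (4/6)(u(x+h,y) − u(x−h,y)) + (1/6)(u(x+h,y−h) − u(x−h,y−h)) ]. Then as h → 0, D_I(h) = ∂_x u(x,y) + (h²/6) Δ(∂_x u)(x,y) + O(h⁴), where Δ(∂_x u) = ∂_{xxx} u + ∂_{xyy} u; i.e., the leading-order error term involves only the Laplacian of ∂_x u and is therefore directionally independent (isotropic). -/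
/-!
Regroup the stencil as `∑ wᵥ (g (z + h • v) - g (z - h • v))` with `g = uncurry u`, `z = (x, y)`,
directions `v = (1, 1), (1, 0), (1, -1)` and weights `1/6, 4/6, 1/6`. Each bracket is the odd part of
the restriction of `g` to a line, so Taylor's theorem gives
`2h Dg(z) v + (h³/3) D³g(z)(v, v, v) + O(h⁵)`. The weights sum the linear terms to `Dg(z) e₁`, and,
because `D³g(z)` is symmetric, the cubic terms to `D³g(z)(e₁, e₁, e₁) + D³g(z)(e₂, e₂, e₁)`, which is
`∂ₓΔu`. Dividing by `2h` gives the claim.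
-/

open Asymptotics Filter Topology Real

section Taylor

variable {E : Type*} [NormedAddCommGroup E] [NormedSpace ℝ E]

theorem taylor_isBigO_univ {f : ℝ → E} {x₀ : ℝ} {n : ℕ} (hf : ContDiff ℝ (n + 1) f) :
    (fun x ↦ f x - taylorWithinEval f n Set.univ x₀ x) =O[𝓝 x₀] fun x ↦ (x - x₀) ^ (n + 1) := by
  have hsucc := (taylor_isLittleO_univ (x₀ := x₀) (by exact_mod_cast hf)).isBigO
  have hterm : (fun x ↦ (((n + 1 : ℝ) * n.factorial)⁻¹ * (x - x₀) ^ (n + 1)) •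
      iteratedDerivWithin (n + 1) f Set.univ x₀) =O[𝓝 x₀] fun x ↦ (x - x₀) ^ (n + 1) :=
    (((isBigO_refl _ _).const_mul_left _).smul
      (isBigO_const_const (iteratedDerivWithin (n + 1) f Set.univ x₀) one_ne_zero _)).congr_right
      (by simp)
  refine (hsucc.add hterm).congr_left fun x ↦ ?_
  rw [taylorWithinEval_succ]
  abel

theorem iteratedDeriv_sub_comp_neg {φ : ℝ → E} {n : ℕ} (hφ : ContDiff ℝ n φ) :
    iteratedDeriv n (fun h ↦ φ h - φ (-h)) 0 = (1 - (-1) ^ n : ℝ) • iteratedDeriv n φ 0 := by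
  rw [iteratedDeriv_fun_sub (g := fun h ↦ φ (-h)) hφ.contDiffAt (hφ.comp contDiff_neg).contDiffAt,
    iteratedDeriv_comp_neg, neg_zero, sub_smul, one_smul]

theorem sub_comp_neg_sub_taylor_isBigO {φ : ℝ → E} (hφ : ContDiff ℝ 5 φ) :
    (fun h ↦ φ h - φ (-h) - ((2 * h) • deriv φ 0 + (h ^ 3 / 3) • iteratedDeriv 3 φ 0))
      =O[𝓝 0] fun h ↦ h ^ 5 := by
  have hodd : ContDiff ℝ (4 + 1) fun h ↦ φ h - φ (-h) := hφ.sub (hφ.comp contDiff_neg)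
  refine (taylor_isBigO_univ hodd).congr (fun h ↦ ?_) (fun h ↦ by simp)
  have hk (k : ℕ) (hk : k ≤ 5) := iteratedDeriv_sub_comp_neg (hφ.of_le (by exact_mod_cast hk))
  simp only [taylor_within_apply, iteratedDerivWithin_univ, Finset.sum_range_succ,
    Finset.sum_range_zero, hk _ (by norm_num : 0 ≤ 5), hk _ (by norm_num : 1 ≤ 5),
    hk _ (by norm_num : 2 ≤ 5), hk _ (by norm_num : 3 ≤ 5), hk _ (by norm_num : 4 ≤ 5),
    iteratedDeriv_one]
  norm_num [Nat.factorial, smul_smul]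
  module

end Taylor

theorem isBigO_div_self_of_isBigO_pow_succ {f : ℝ → ℝ} {n : ℕ}
    (hf : f =O[𝓝 0] fun h ↦ h ^ (n + 1)) :
    (fun h ↦ f h / h) =O[𝓝[≠] 0] fun h ↦ h ^ n := by
  simp_rw [div_eq_mul_inv]
  refine ((hf.mono nhdsWithin_le_nhds).mul (isBigO_refl (·⁻¹) _)).trans_eventuallyEq ?_
  filter_upwards [self_mem_nhdsWithin] with h (hh : h ≠ 0)
  rw [pow_succ, mul_assoc, mul_inv_cancel₀ hh, mul_one]

section LineDeriv

variable {E F : Type*} [NormedAddCommGroup E] [NormedSpace ℝ E]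
  [NormedAddCommGroup F] [NormedSpace ℝ F]

theorem deriv_comp_add_smul (g : E → F) (z v : E) :
    deriv (fun t : ℝ ↦ g (z + t • v)) = fun t ↦ lineDeriv ℝ g (z + t • v) v := by
  funext t
  rw [lineDeriv, ← zero_add t, ← deriv_comp_add_const, zero_add]
  congr 1
  funext s
  rw [add_smul, add_comm (s • v), add_assoc]

theorem deriv_deriv_comp_add_smul (g : E → F) (z v : E) :
    deriv (deriv fun t : ℝ ↦ g (z + t • v)) =
      fun t ↦ lineDeriv ℝ (lineDeriv ℝ g · v) (z + t • v) v := by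
  rw [deriv_comp_add_smul, deriv_comp_add_smul (lineDeriv ℝ g · v)]

theorem lineDeriv_clm_apply {G : Type*} [NormedAddCommGroup G] [NormedSpace ℝ G]
    {Φ : E → F →L[ℝ] G} {z : E} (hΦ : DifferentiableAt ℝ Φ z) (v : E) (w : F) :
    lineDeriv ℝ (Φ · w) z v = fderiv ℝ Φ z v w := by
  rw [(hΦ.clm_apply (differentiableAt_const w)).lineDeriv_eq_fderiv,
    fderiv_clm_apply hΦ (differentiableAt_const w)]
  simp

theorem lineDeriv_lineDeriv {g : E → F} (hg : ContDiff ℝ 2 g) (v w : E) :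
    (lineDeriv ℝ (lineDeriv ℝ g · w) · v) = (fderiv ℝ (fderiv ℝ g) · v w) := by
  have hdiff : Differentiable ℝ g := hg.differentiable (by norm_num)
  have hdiff' : Differentiable ℝ (fderiv ℝ g) :=
    (hg.fderiv_right (m := 1) (by norm_num)).differentiable one_ne_zero
  funext y
  simp only [fun y ↦ (hdiff y).lineDeriv_eq_fderiv (v := w)]
  exact lineDeriv_clm_apply (hdiff' y) v w

theorem lineDeriv_lineDeriv_comm {g : E → F} (hg : ContDiff ℝ 2 g) (v w : E) :
    (lineDeriv ℝ (lineDeriv ℝ g · w) · v) = (lineDeriv ℝ (lineDeriv ℝ g · v) · w) := by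
  rw [lineDeriv_lineDeriv hg, lineDeriv_lineDeriv hg]
  funext y
  exact hg.contDiffAt.isSymmSndFDerivAt (by simp) v w

theorem lineDeriv_lineDeriv_lineDeriv {g : E → F} (hg : ContDiff ℝ 3 g) (z u v w : E) :
    lineDeriv ℝ (lineDeriv ℝ (lineDeriv ℝ g · w) · v) z u =
      fderiv ℝ (fderiv ℝ (fderiv ℝ g)) z u v w := by
  have hB : Differentiable ℝ (fderiv ℝ (fderiv ℝ g)) :=
    ((hg.fderiv_right (m := 2) (by norm_num)).fderiv_right (m := 1) (by norm_num)).differentiable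
      one_ne_zero
  rw [lineDeriv_lineDeriv (hg.of_le (by norm_num)),
    lineDeriv_clm_apply ((hB z).clm_apply (differentiableAt_const v)),
    fderiv_clm_apply (hB z) (differentiableAt_const v)]
  simp

theorem fderiv_fderiv_fderiv_swap₁₂ {g : E → F} (hg : ContDiff ℝ 3 g) (z u v w : E) :
    fderiv ℝ (fderiv ℝ (fderiv ℝ g)) z u v w = fderiv ℝ (fderiv ℝ (fderiv ℝ g)) z v u w := by
  rw [(hg.fderiv_right (m := 2) (by norm_num)).contDiffAt.isSymmSndFDerivAt (by simp) u v]

theorem fderiv_fderiv_fderiv_swap₂₃ {g : E → F} (hg : ContDiff ℝ 3 g) (z u v w : E) :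
    fderiv ℝ (fderiv ℝ (fderiv ℝ g)) z u v w = fderiv ℝ (fderiv ℝ (fderiv ℝ g)) z u w v := by
  rw [← lineDeriv_lineDeriv_lineDeriv hg, lineDeriv_lineDeriv_comm (hg.of_le (by norm_num)),
    lineDeriv_lineDeriv_lineDeriv hg]

theorem deriv_comp_add_smul_zero {g : E → F} (hg : Differentiable ℝ g) (z v : E) :
    deriv (fun t : ℝ ↦ g (z + t • v)) 0 = fderiv ℝ g z v := by
  simp only [deriv_comp_add_smul, zero_smul, add_zero]
  exact (hg z).lineDeriv_eq_fderiv

theorem iteratedDeriv_three_comp_add_smul_zero {g : E → F} (hg : ContDiff ℝ 3 g) (z v : E) :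
    iteratedDeriv 3 (fun t : ℝ ↦ g (z + t • v)) 0 = fderiv ℝ (fderiv ℝ (fderiv ℝ g)) z v v v := by
  simp only [iteratedDeriv_succ, iteratedDeriv_zero]
  rw [deriv_deriv_comp_add_smul, deriv_comp_add_smul (lineDeriv ℝ (lineDeriv ℝ g · v) · v)]
  simp only [zero_smul, add_zero]
  exact lineDeriv_lineDeriv_lineDeriv hg z v v v

end LineDeriv

section Stencil

variable {F : Type*} [NormedAddCommGroup F] [NormedSpace ℝ F]

theorem kumar_weights_linear (L : ℝ × ℝ →L[ℝ] F) :
    (1 / 6 : ℝ) • L (1, 1) + (4 / 6 : ℝ) • L (1, 0) + (1 / 6 : ℝ) • L (1, -1) = L (1, 0) := by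
  have hsum : ((1, 1) : ℝ × ℝ) = (1, 0) + (0, 1) := by simp
  have hdiff : ((1, -1) : ℝ × ℝ) = (1, 0) - (0, 1) := by simp
  rw [hsum, hdiff, map_add, map_sub]
  module

theorem kumar_weights_cubic (T : ℝ × ℝ →L[ℝ] ℝ × ℝ →L[ℝ] ℝ × ℝ →L[ℝ] F)
    (h₁₂ : ∀ u v w, T u v w = T v u w) (h₂₃ : ∀ u v w, T u v w = T u w v) :
    (1 / 6 : ℝ) • T (1, 1) (1, 1) (1, 1) + (4 / 6 : ℝ) • T (1, 0) (1, 0) (1, 0)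
      + (1 / 6 : ℝ) • T (1, -1) (1, -1) (1, -1) = T (1, 0) (1, 0) (1, 0) + T (0, 1) (0, 1) (1, 0) := by
  have hsum : ((1, 1) : ℝ × ℝ) = (1, 0) + (0, 1) := by simp
  have hdiff : ((1, -1) : ℝ × ℝ) = (1, 0) - (0, 1) := by simp
  rw [hsum, hdiff]
  simp only [map_add, map_sub, add_apply, sub_apply]
  rw [h₁₂ (1, 0) (0, 1) (0, 1), h₂₃ (0, 1) (1, 0) (0, 1)]
  module

theorem kumar_stencil_sub_taylor_isBigO {g : ℝ × ℝ → F} (hg : ContDiff ℝ 5 g) (z : ℝ × ℝ) :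
    (fun h : ℝ ↦ (1 / 6 : ℝ) • (g (z + h • (1, 1)) - g (z + (-h) • (1, 1)))
        + (4 / 6 : ℝ) • (g (z + h • (1, 0)) - g (z + (-h) • (1, 0)))
        + (1 / 6 : ℝ) • (g (z + h • (1, -1)) - g (z + (-h) • (1, -1)))
        - ((2 * h) • fderiv ℝ g z (1, 0) + (h ^ 3 / 3) •
          (fderiv ℝ (fderiv ℝ (fderiv ℝ g)) z (1, 0) (1, 0) (1, 0)
            + fderiv ℝ (fderiv ℝ (fderiv ℝ g)) z (0, 1) (0, 1) (1, 0))))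
      =O[𝓝 0] fun h ↦ h ^ 5 := by
  have hg₃ : ContDiff ℝ 3 g := hg.of_le (by norm_num)
  have hodd (v : ℝ × ℝ) := sub_comp_neg_sub_taylor_isBigO (φ := fun t ↦ g (z + t • v))
    (hg.comp (contDiff_const.add (contDiff_id.smul contDiff_const)))
  simp only [deriv_comp_add_smul_zero (hg.differentiable (by norm_num)),
    iteratedDeriv_three_comp_add_smul_zero hg₃] at hodd
  refine ((((hodd (1, 1)).const_smul_left (1 / 6 : ℝ)).add
    ((hodd (1, 0)).const_smul_left (4 / 6 : ℝ))).add
    ((hodd (1, -1)).const_smul_left (1 / 6 : ℝ))).congr_left fun h ↦ ?_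
  have hlin := kumar_weights_linear (fderiv ℝ g z)
  have hcubic := kumar_weights_cubic _ (fderiv_fderiv_fderiv_swap₁₂ hg₃ z)
    (fderiv_fderiv_fderiv_swap₂₃ hg₃ z)
  simp only [Pi.smul_apply]
  linear_combination (norm := module) -(2 * h) • hlin - (h ^ 3 / 3) • hcubic

end Stencil

theorem apply_left_eq_uncurry_comp_add_smul {α : Type*} (u : ℝ → ℝ → α) (y : ℝ) :
    (fun s ↦ u s y) = fun s : ℝ ↦ Function.uncurry u ((0, y) + s • (1, 0)) := by
  funext s
  simp

section Partials

variable {F : Type*} [NormedAddCommGroup F] [NormedSpace ℝ F] {u : ℝ → ℝ → F}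

theorem deriv_apply_left_eq_fderiv_uncurry (hu : Differentiable ℝ (Function.uncurry u))
    (x y : ℝ) : deriv (fun s ↦ u s y) x = fderiv ℝ (Function.uncurry u) (x, y) (1, 0) := by
  rw [apply_left_eq_uncurry_comp_add_smul, deriv_comp_add_smul]
  simpa using (hu (x, y)).lineDeriv_eq_fderiv

theorem deriv_deriv_deriv_apply_left_eq_fderiv_uncurry
    (hu : ContDiff ℝ 3 (Function.uncurry u)) (x y : ℝ) :
    deriv (fun s ↦ deriv (fun s' ↦ deriv (fun s'' ↦ u s'' y) s') s) x =
      fderiv ℝ (fderiv ℝ (fderiv ℝ (Function.uncurry u))) (x, y) (1, 0) (1, 0) (1, 0) := by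
  rw [apply_left_eq_uncurry_comp_add_smul, deriv_deriv_comp_add_smul,
    deriv_comp_add_smul (lineDeriv ℝ (lineDeriv ℝ (Function.uncurry u) · (1, 0)) · (1, 0))]
  simpa using lineDeriv_lineDeriv_lineDeriv hu (x, y) (1, 0) (1, 0) (1, 0)

theorem deriv_deriv_deriv_apply_right_right_left_eq_fderiv_uncurry
    (hu : ContDiff ℝ 3 (Function.uncurry u)) (x y : ℝ) :
    deriv (fun t ↦ deriv (fun t' ↦ deriv (fun s ↦ u s t') x) t) y =
      fderiv ℝ (fderiv ℝ (fderiv ℝ (Function.uncurry u))) (x, y) (0, 1) (0, 1) (1, 0) := by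
  have hline : (fun t ↦ deriv (fun s ↦ u s t) x) =
      fun t : ℝ ↦ lineDeriv ℝ (Function.uncurry u) ((x, 0) + t • (0, 1)) (1, 0) := by
    funext t
    rw [apply_left_eq_uncurry_comp_add_smul, deriv_comp_add_smul]
    simp
  rw [hline, deriv_deriv_comp_add_smul (lineDeriv ℝ (Function.uncurry u) · (1, 0))]
  simpa using lineDeriv_lineDeriv_lineDeriv hu (x, y) (0, 1) (0, 1) (1, 0)

end Partials

/-- Kumar's isotropic first-derivative stencil satisfies
`D_I(h) = ∂_x u + (h²/6)(∂_{xxx}u + ∂_{xyy}u) + O(h⁴)` as `h → 0`: the leading error term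
is `(h²/6) Δ(∂_x u)`, a function of the Laplacian only, hence isotropic. -/
theorem kumar_isotropic_first_derivative
    (u : ℝ → ℝ → ℝ) (hu : ContDiff ℝ 5 (Function.uncurry u)) (x y : ℝ)
    (px pxxx pxyy : ℝ)
    (hpx : px = deriv (fun s => u s y) x)
    (hpxxx : pxxx = deriv (fun s => deriv (fun s' => deriv (fun s'' => u s'' y) s') s) x)
    (hpxyy : pxyy = deriv (fun t => deriv (fun t' => deriv (fun s => u s t') x) t) y) :
    (fun h : ℝ =>
        (1 / (2 * h)) *
            ((1/6) * (u (x+h) (y+h) - u (x-h) (y+h))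
              + (4/6) * (u (x+h) y - u (x-h) y)
              + (1/6) * (u (x+h) (y-h) - u (x-h) (y-h)))
          - (px + (h ^ 2 / 6) * (pxxx + pxyy)))
      =O[𝓝[≠] (0:ℝ)] (fun h : ℝ => h ^ 4) := by
  have hu₃ : ContDiff ℝ 3 (Function.uncurry u) := hu.of_le (by norm_num)
  rw [deriv_apply_left_eq_fderiv_uncurry (hu.differentiable (by norm_num))] at hpx
  rw [deriv_deriv_deriv_apply_left_eq_fderiv_uncurry hu₃] at hpxxx
  rw [deriv_deriv_deriv_apply_right_right_left_eq_fderiv_uncurry hu₃] at hpxyy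
  have hdiv := (isBigO_div_self_of_isBigO_pow_succ
    (kumar_stencil_sub_taylor_isBigO hu (x, y))).const_mul_left (1 / 2)
  refine hdiv.congr' ?_ EventuallyEq.rfl
  filter_upwards [self_mem_nhdsWithin] with h (hh : h ≠ 0)
  simp only [← hpx, ← hpxxx, ← hpxyy, smul_eq_mul, Prod.smul_mk, Prod.mk_add_mk,
    Function.uncurry_apply_pair, mul_one, mul_zero, mul_neg, add_zero,
    ← sub_eq_add_neg, sub_neg_eq_add]
  field_simp
  ring
end

section
/- Let u : ℝ² → ℝ be six times continuously differentiable (e.g. C⁶ on a neighborhood of a fixed point (x,y), or C^∞). Define for h ≠ 0 Kumar's isotropic second-derivative stencil D_{II}(h) = (1/h²) [ (1/12)(u(x+h,y+h) − 2u(x,y+h) + u(x−h,y+h)) + (10/12)(u(x+h,y) − 2u(x,y) + u(x−h,y)) + (1/12)(u(x+h,y−h) − 2u(x,y−h) + u(x−h,y−h)) ]. Then as h → 0, D_{II}(h) = ∂_{xx} u(x,y) + (h²/12) Δ(∂_{xx} u)(x,y) + O(h⁴), where Δ(∂_{xx} u) = ∂_{xxxx} u + ∂_{xxyy} u; i.e.,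 the leading-order error term involves only the Laplacian of ∂_{xx} u and is therefore directionally independent (isotropic). -/
open Asymptotics Filter Topology Real
open Finset Nat

/-!
Write `D(h, t) = u(x+h, t) - 2 u(x, t) + u(x-h, t)`, so that the stencil numerator is
`D(h, y) + (1/12) (D(h, y+h) - 2 D(h, y) + D(h, y-h))`. Taylor's theorem in `x`, with a remainder
bound uniform in `t` near `y`, gives `D(h, t) = h² ∂ₓ²u(x, t) + (h⁴/12) ∂ₓ⁴u(x, t) + O(h⁶)`.
Taylor's theorem in `y`, applied to `∂ₓ²u(x, ·)` and `∂ₓ⁴u(x, ·)`, turns the second differences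
in `y` of these coefficients into `h² ∂ᵧ²∂ₓ²u(x, y) + O(h⁴)` and `O(h²)`. Only symmetric sums
`g(a+h) + g(a-h)` occur, so every odd-order Taylor term cancels.
-/

theorem abs_sub_taylor_le {f : ℝ → ℝ} {n : ℕ} (hf : ContDiff ℝ (n + 1) f) {a h M : ℝ}
    (hM : ∀ s ∈ Set.uIcc a (a + h), |iteratedDeriv (n + 1) f s| ≤ M) :
    |f (a + h) - ∑ k ∈ range (n + 1), iteratedDeriv k f a * h ^ k / k !|
      ≤ M * |h| ^ (n + 1) / (n + 1)! := by
  rcases eq_or_ne h 0 with rfl | hh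
  · simp [sum_range_succ']
  have ha : a ≠ a + h := by simpa using hh
  obtain ⟨ξ, hξ, hrem⟩ := taylor_mean_remainder_lagrange_iteratedDeriv ha hf.contDiffOn
  have htaylor : taylorWithinEval f n (Set.uIcc a (a + h)) a (a + h)
      = ∑ k ∈ range (n + 1), iteratedDeriv k f a * h ^ k / k ! := by
    rw [taylor_within_apply]
    refine sum_congr rfl fun k hk => ?_
    rw [iteratedDerivWithin_eq_iteratedDeriv (uniqueDiffOn_uIcc ha)
      (hf.contDiffAt.of_le (by exact_mod_cast (mem_range.1 hk).le))
      Set.left_mem_uIcc, smul_eq_mul, add_sub_cancel_left]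
    ring
  rw [← htaylor, hrem, abs_div, abs_mul, add_sub_cancel_left, abs_pow, Nat.abs_cast]
  gcongr
  exact hM ξ (Set.uIoo_subset_uIcc_self hξ)

theorem abs_add_reflect_sub_taylor_le {g : ℝ → ℝ} {n : ℕ} (hg : ContDiff ℝ (n + 1) g)
    {a h M : ℝ} (hM : ∀ s, |s - a| ≤ |h| → |iteratedDeriv (n + 1) g s| ≤ M) :
    |g (a + h) + g (a - h)
        - ∑ k ∈ range (n + 1), (1 + (-1) ^ k) * iteratedDeriv k g a * h ^ k / k !|
      ≤ 2 * M * |h| ^ (n + 1) / (n + 1)! := by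
  have hM' : ∀ h', |h'| = |h| → ∀ s ∈ Set.uIcc a (a + h'), |iteratedDeriv (n + 1) g s| ≤ M :=
    fun h' hh' s hs => hM s (by simpa [hh'] using Set.abs_sub_left_of_mem_uIcc hs)
  have hplus := abs_sub_taylor_le hg (hM' h rfl)
  have hminus := abs_sub_taylor_le hg (hM' (-h) (abs_neg h))
  rw [← sub_eq_add_neg, abs_neg] at hminus
  have hsum : ∑ k ∈ range (n + 1), (1 + (-1) ^ k) * iteratedDeriv k g a * h ^ k / k !
      = ∑ k ∈ range (n + 1), iteratedDeriv k g a * h ^ k / k !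
        + ∑ k ∈ range (n + 1), iteratedDeriv k g a * (-h) ^ k / k ! := by
    rw [← sum_add_distrib]
    refine sum_congr rfl fun k _ => ?_
    rw [neg_pow]
    ring
  rw [hsum]
  calc _ = |(g (a + h) - ∑ k ∈ range (n + 1), iteratedDeriv k g a * h ^ k / k !)
          + (g (a - h) - ∑ k ∈ range (n + 1), iteratedDeriv k g a * (-h) ^ k / k !)| := by
        ring_nf
    _ ≤ _ := abs_add_le _ _
    _ ≤ _ := add_le_add hplus hminus
    _ = _ := by ring

theorem isBigO_add_reflect_sub_taylor {g : ℝ → ℝ} {n : ℕ} (hg : ContDiff ℝ (n + 1) g) (a : ℝ) :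
    (fun h => g (a + h) + g (a - h)
        - ∑ k ∈ range (n + 1), (1 + (-1) ^ k) * iteratedDeriv k g a * h ^ k / k !)
      =O[𝓝 0] fun h => h ^ (n + 1) := by
  obtain ⟨M, hM⟩ := (isCompact_closedBall a 1).exists_bound_of_continuousOn
    (hg.continuous_iteratedDeriv' (n + 1)).continuousOn
  refine IsBigO.of_bound (2 * M / (n + 1)!) ?_
  filter_upwards [Metric.closedBall_mem_nhds (0 : ℝ) one_pos] with h hh
  rw [mem_closedBall_zero_iff, norm_eq_abs] at hh
  have := abs_add_reflect_sub_taylor_le hg (a := a) (h := h) (M := M) fun s hs =>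
    hM s (by rw [Metric.mem_closedBall, Real.dist_eq]; linarith)
  rw [norm_eq_abs, norm_eq_abs, abs_pow]
  convert this using 1
  ring

theorem iteratedDeriv_comp_add_smul {E G : Type*} [NormedAddCommGroup E] [NormedSpace ℝ E]
    [NormedAddCommGroup G] [NormedSpace ℝ G] {n : WithTop ℕ∞} {F : E → G} (hF : ContDiff ℝ n F)
    {k : ℕ} (hk : k ≤ n) (p v : E) (s : ℝ) :
    iteratedDeriv k (fun s => F (p + s • v)) s = iteratedFDeriv ℝ k F (p + s • v) fun _ => v := by
  have hline : (fun s : ℝ => F (p + s • v))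
      = (fun z => F (p + z)) ∘ ContinuousLinearMap.smulRight (1 : ℝ →L[ℝ] ℝ) v := by
    ext; simp
  rw [iteratedDeriv_eq_iteratedFDeriv, hline, ContinuousLinearMap.iteratedFDeriv_comp_right _
    (f := fun z => F (p + z)) (hF.comp (contDiff_const.add contDiff_id)) s hk,
    iteratedFDeriv_comp_add_left]
  simp

theorem iteratedDeriv_slice_eq_iteratedFDeriv {n : WithTop ℕ∞} {u : ℝ → ℝ → ℝ}
    (hu : ContDiff ℝ n (Function.uncurry u)) {k : ℕ} (hk : k ≤ n) (s t : ℝ) :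
    iteratedDeriv k (fun s => u s t) s
      = iteratedFDeriv ℝ k (Function.uncurry u) (s, t) fun _ => (1, 0) := by
  have h := iteratedDeriv_comp_add_smul hu hk ((0 : ℝ), t) ((1 : ℝ), (0 : ℝ)) s
  simp only [Prod.smul_mk, smul_eq_mul, mul_one, mul_zero, Prod.mk_add_mk, zero_add, add_zero,
    Function.uncurry_apply_pair] at h
  exact h

theorem contDiff_iteratedDeriv_slice {m k : ℕ} {u : ℝ → ℝ → ℝ}
    (hu : ContDiff ℝ (m + k) (Function.uncurry u)) :
    ContDiff ℝ m fun q : ℝ × ℝ => iteratedDeriv k (fun s => u s q.2) q.1 := by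
  simp only [iteratedDeriv_slice_eq_iteratedFDeriv hu (by exact_mod_cast le_add_self)]
  exact (ContinuousMultilinearMap.apply ℝ _ ℝ _).contDiff.comp hu.iteratedFDeriv_right'

theorem contDiff_iteratedDeriv_slice_apply {m k : ℕ} {u : ℝ → ℝ → ℝ}
    (hu : ContDiff ℝ (m + k) (Function.uncurry u)) (x : ℝ) :
    ContDiff ℝ m fun t => iteratedDeriv k (fun s => u s t) x :=
  (contDiff_iteratedDeriv_slice hu).comp (contDiff_const.prodMk contDiff_id)

theorem isBigO_add_reflect_sub_taylor_slice {n : ℕ} {u : ℝ → ℝ → ℝ}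
    (hu : ContDiff ℝ (n + 1) (Function.uncurry u)) (x y : ℝ) :
    (fun q : ℝ × ℝ => u (x + q.1) q.2 + u (x - q.1) q.2 - ∑ k ∈ range (n + 1),
        (1 + (-1) ^ k) * iteratedDeriv k (fun s => u s q.2) x * q.1 ^ k / k !)
      =O[𝓝 (0, y)] fun q => q.1 ^ (n + 1) := by
  obtain ⟨M, hM⟩ := (isCompact_closedBall (x, y) 1).exists_bound_of_continuousOn
    (contDiff_iteratedDeriv_slice (m := 0) (k := n + 1) (by simpa using hu)).continuous.continuousOn
  refine IsBigO.of_bound (2 * M / (n + 1)!) ?_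
  filter_upwards [Metric.closedBall_mem_nhds ((0 : ℝ), y) one_pos] with ⟨h, t⟩ hht
  rw [Metric.mem_closedBall, Prod.dist_eq, Real.dist_eq, Real.dist_eq, sub_zero, max_le_iff] at hht
  have hslice : ContDiff ℝ (n + 1) fun s => u s t :=
    hu.comp (contDiff_id.prodMk contDiff_const)
  have := abs_add_reflect_sub_taylor_le hslice (a := x) (h := h) (M := M) fun s hs => by
    simpa using hM (s, t) (by
      rw [Metric.mem_closedBall, Prod.dist_eq, Real.dist_eq, Real.dist_eq]
      exact max_le (hs.trans hht.1) hht.2)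
  rw [norm_eq_abs, norm_eq_abs, abs_pow]
  convert this using 1
  ring

theorem isBigO_pow_mul {l : Filter ℝ} {f : ℝ → ℝ} {a b : ℕ} (hf : f =O[l] fun h => h ^ b) :
    (fun h => h ^ a * f h) =O[l] fun h => h ^ (a + b) :=
  ((isBigO_refl _ _).mul hf).congr_right fun _ => (pow_add _ _ _).symm

theorem isBigO_div_pow_nhdsNE {f : ℝ → ℝ} {m n : ℕ} (hf : f =O[𝓝 0] fun h => h ^ (n + m)) :
    (fun h => f h / h ^ m) =O[𝓝[≠] 0] fun h => h ^ n := by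
  refine ((hf.mono nhdsWithin_le_nhds).mul (isBigO_refl (fun h : ℝ => (h ^ m)⁻¹) _)).congr'
    (Eventually.of_forall fun h => div_eq_mul_inv _ _) ?_
  filter_upwards [self_mem_nhdsWithin] with h hh
  rw [pow_add, mul_inv_cancel_right₀ (pow_ne_zero m hh)]

/-- Kumar's isotropic second-derivative stencil satisfies
`D_{II}(h) = ∂_{xx} u + (h²/12)(∂_{xxxx}u + ∂_{xxyy}u) + O(h⁴)` as `h → 0`: the leading
error term is `(h²/12) Δ(∂_{xx} u)`, a function of the Laplacian only, hence isotropic. -/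
theorem kumar_isotropic_second_derivative
    (u : ℝ → ℝ → ℝ) (hu : ContDiff ℝ 6 (Function.uncurry u)) (x y : ℝ)
    (pxx pxxxx pxxyy : ℝ)
    (hpxx : pxx = deriv (fun s => deriv (fun s' => u s' y) s) x)
    (hpxxxx : pxxxx = deriv (fun s => deriv (fun s' => deriv (fun s'' =>
        deriv (fun s''' => u s''' y) s'') s') s) x)
    (hpxxyy : pxxyy = deriv (fun t => deriv (fun t' =>
        deriv (fun s => deriv (fun s' => u s' t') s) x) t) y) :
    (fun h : ℝ =>
        (1 / h ^ 2) *
            ((1/12) * (u (x+h) (y+h) - 2 * u x (y+h) + u (x-h) (y+h))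
              + (10/12) * (u (x+h) y - 2 * u x y + u (x-h) y)
              + (1/12) * (u (x+h) (y-h) - 2 * u x (y-h) + u (x-h) (y-h)))
          - (pxx + (h ^ 2 / 12) * (pxxxx + pxxyy)))
      =O[𝓝[≠] (0:ℝ)] (fun h : ℝ => h ^ 4) := by
  have hpxx' : pxx = iteratedDeriv 2 (fun s => u s y) x := by
    rw [hpxx, iteratedDeriv_eq_iterate]; rfl
  have hpxxxx' : pxxxx = iteratedDeriv 4 (fun s => u s y) x := by
    rw [hpxxxx, iteratedDeriv_eq_iterate]; rfl
  have hpxxyy' : pxxyy = iteratedDeriv 2 (fun t => iteratedDeriv 2 (fun s => u s t) x) y := by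
    simp only [hpxxyy, iteratedDeriv_eq_iterate]; rfl
  have hR := isBigO_add_reflect_sub_taylor_slice (n := 5) (by exact_mod_cast hu) x y
  have hRb (b : ℝ) : (_ ∘ fun h : ℝ => (h, y + b * h)) =O[𝓝 0] fun h : ℝ => h ^ (5 + 1) :=
    hR.comp_tendsto ((by fun_prop : Continuous fun h : ℝ => (h, y + b * h)).tendsto' 0 _ (by simp))
  have hT1 := ((hRb 1).add ((hRb 0).const_mul_left 10)).add (hRb (-1))
  have hT2 := isBigO_add_reflect_sub_taylor (n := 3) (a := y) <| by
    exact_mod_cast contDiff_iteratedDeriv_slice_apply (m := 4) (k := 2) (by exact_mod_cast hu) x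
  have hT3 := isBigO_add_reflect_sub_taylor (n := 1) (a := y) <| by
    exact_mod_cast contDiff_iteratedDeriv_slice_apply (m := 2) (k := 4) (by exact_mod_cast hu) x
  simp only [Function.comp_def, sum_range_succ, sum_range_zero] at hT1 hT2 hT3
  norm_num [Nat.factorial, ← sub_eq_add_neg] at hT1 hT2 hT3
  have hnum := (hT1.add (isBigO_pow_mul (a := 2) hT2)).add
    ((isBigO_pow_mul (a := 4) hT3).const_mul_left (1 / 12))
  refine ((isBigO_div_pow_nhdsNE (n := 4) (m := 2) hnum).const_mul_left (1 / 12)).congr' ?_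
    EventuallyEq.rfl
  filter_upwards [self_mem_nhdsWithin] with h (hh : h ≠ 0)
  rw [hpxx', hpxxxx', hpxxyy']
  field_simp
  ring
end
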